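/- For all smooth vector fields u and ξ on ℝ^n the generalized deviation identity holds pointwise: u^j (u^i ξ^k_{|i})_{|j} = R^k_{ijl} u^i u^j ξ^l + ξ^k_{|i} (u^i_{|j} u^j) + u^i u^j (Tξ)^k_{i|j} + (£_ξ F)^k − u^i ((£_ξ u)^k)_{|i} − u^k_{|i} (£_ξ u)^i, where F^k := u^i u^k_{|i} and (Tξ)^k_i := T^k_{il} ξ^l is a (1,1)-tensor field. -/

import Mathlib

open scoped BigOperators

noncomputable section

/-- Partial derivative `∂_j f` of a scalar function on `ℝ^n`. -/
def pd {n : ℕ} (j : Fin n) (f : (Fin n → ℝ) → ℝ) (x : Fin n → ℝ) : ℝ :=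
  fderiv ℝ f x (Pi.single j 1)

/-- Covariant derivative of a vector field: `ξ^k_{|j} = ∂_j ξ^k + Γ^k_{mj} ξ^m`. -/
def covV {n : ℕ} (Γ : Fin n → Fin n → Fin n → (Fin n → ℝ) → ℝ)
    (ξ : Fin n → (Fin n → ℝ) → ℝ) (k j : Fin n) (x : Fin n → ℝ) : ℝ :=
  pd j (ξ k) x + ∑ m, Γ k m j x * ξ m x

/-- Covariant derivative of a (1,1)-tensor field:
`A^k_{i|j} = ∂_j A^k_i + Γ^k_{mj} A^m_i − Γ^m_{ij} A^k_m`. -/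
def covT {n : ℕ} (Γ : Fin n → Fin n → Fin n → (Fin n → ℝ) → ℝ)
    (A : Fin n → Fin n → (Fin n → ℝ) → ℝ) (k i j : Fin n) (x : Fin n → ℝ) : ℝ :=
  pd j (A k i) x + ∑ m, Γ k m j x * A m i x - ∑ m, Γ m i j x * A k m x

/-- Curvature tensor
`R^k_{ijl} = ∂_j Γ^k_{il} − ∂_l Γ^k_{ij} + Γ^n_{il} Γ^k_{nj} − Γ^n_{ij} Γ^k_{nl}`. -/
def curv {n : ℕ} (Γ : Fin n → Fin n → Fin n → (Fin n → ℝ) → ℝ)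
    (k i j l : Fin n) (x : Fin n → ℝ) : ℝ :=
  pd j (Γ k i l) x - pd l (Γ k i j) x
    + ∑ m, Γ m i l x * Γ k m j x - ∑ m, Γ m i j x * Γ k m l x

/-- Torsion tensor `T^k_{ij} = Γ^k_{ji} − Γ^k_{ij}`. -/
def tor {n : ℕ} (Γ : Fin n → Fin n → Fin n → (Fin n → ℝ) → ℝ)
    (k i j : Fin n) (x : Fin n → ℝ) : ℝ :=
  Γ k j i x - Γ k i j x

/-- Lie derivative of a vector field: `(£_ξ u)^k = ξ^j ∂_j u^k − u^j ∂_j ξ^k`. -/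
def lieV {n : ℕ} (ξ u : Fin n → (Fin n → ℝ) → ℝ) (k : Fin n) (x : Fin n → ℝ) : ℝ :=
  ∑ j, ξ j x * pd j (u k) x - ∑ j, u j x * pd j (ξ k) x

/-- Lie derivative of a (1,1)-tensor field:
`(£_ξ A)^k_i = ξ^m ∂_m A^k_i − A^m_i ∂_m ξ^k + A^k_m ∂_i ξ^m`. -/
def lieT {n : ℕ} (ξ : Fin n → (Fin n → ℝ) → ℝ)
    (A : Fin n → Fin n → (Fin n → ℝ) → ℝ) (k i : Fin n) (x : Fin n → ℝ) : ℝ :=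
  ∑ m, ξ m x * pd m (A k i) x - ∑ m, A m i x * pd m (ξ k) x
    + ∑ m, A k m x * pd i (ξ m) x

/-- Lie derivative of the connection coefficients:
`£_ξ Γ^k_{ij} = ∂_j ∂_i ξ^k + ξ^m ∂_m Γ^k_{ij} − Γ^m_{ij} ∂_m ξ^k
  + Γ^k_{mj} ∂_i ξ^m + Γ^k_{im} ∂_j ξ^m`. -/
def lieC {n : ℕ} (ξ : Fin n → (Fin n → ℝ) → ℝ)
    (Γ : Fin n → Fin n → Fin n → (Fin n → ℝ) → ℝ)
    (k i j : Fin n) (x : Fin n → ℝ) : ℝ :=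
  pd j (fun y => pd i (ξ k) y) x + ∑ m, ξ m x * pd m (Γ k i j) x
    - ∑ m, Γ m i j x * pd m (ξ k) x + ∑ m, Γ k m j x * pd i (ξ m) x
    + ∑ m, Γ k i m x * pd j (ξ m) x

section Helpers
variable {n : ℕ}

@[fun_prop]
theorem ContDiff.pd' {f : (Fin n → ℝ) → ℝ} (hf : ContDiff ℝ (⊤ : ℕ∞) f) (j : Fin n) :
    ContDiff ℝ (⊤ : ℕ∞) (pd j f) := by
  have : pd j f = fun x => (fderiv ℝ f x : (Fin n → ℝ) →L[ℝ] ℝ) (Pi.single j 1) := rfl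
  rw [this]
  exact (hf.fderiv_right ((by simp))).clm_apply contDiff_const

theorem pd_add {f g : (Fin n → ℝ) → ℝ} {x : Fin n → ℝ} (hf : DifferentiableAt ℝ f x)
    (hg : DifferentiableAt ℝ g x) (j : Fin n) :
    pd j (fun y => f y + g y) x = pd j f x + pd j g x := by
  simp [pd, fderiv_fun_add hf hg]

theorem pd_sub {f g : (Fin n → ℝ) → ℝ} {x : Fin n → ℝ} (hf : DifferentiableAt ℝ f x)
    (hg : DifferentiableAt ℝ g x) (j : Fin n) :
    pd j (fun y => f y - g y) x = pd j f x - pd j g x := by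
  simp [pd, fderiv_fun_sub hf hg]

theorem pd_mul {f g : (Fin n → ℝ) → ℝ} {x : Fin n → ℝ} (hf : DifferentiableAt ℝ f x)
    (hg : DifferentiableAt ℝ g x) (j : Fin n) :
    pd j (fun y => f y * g y) x = pd j f x * g x + f x * pd j g x := by
  simp [pd, fderiv_fun_mul hf hg]; ring

theorem pd_sum {ι : Type*} {s : Finset ι} {f : ι → (Fin n → ℝ) → ℝ} {x : Fin n → ℝ}
    (hf : ∀ i ∈ s, DifferentiableAt ℝ (f i) x) (j : Fin n) :
    pd j (fun y => ∑ i ∈ s, f i y) x = ∑ i ∈ s, pd j (f i) x := by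
  simp [pd, fderiv_fun_sum hf]

theorem pd_comm {f : (Fin n → ℝ) → ℝ} (hf : ContDiff ℝ (⊤ : ℕ∞) f) (i j : Fin n) (x : Fin n → ℝ) :
    pd i (pd j f) x = pd j (pd i f) x := by
  have hsymm : IsSymmSndFDerivAt ℝ f x :=
    hf.contDiffAt.isSymmSndFDerivAt (by rw [minSmoothness_of_isRCLikeNormedField]; exact WithTop.coe_le_coe.mpr (le_top : (2 : ℕ∞) ≤ ⊤))
  have hd : DifferentiableAt ℝ (fderiv ℝ f) x :=
    ((hf.fderiv_right (m := (⊤ : ℕ∞)) ((by simp))).differentiable (by simp)).differentiableAt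
  have key : ∀ v w : Fin n → ℝ,
      fderiv ℝ (fun y => fderiv ℝ f y w) x v = fderiv ℝ (fderiv ℝ f) x v w := by
    intro v w
    rw [fderiv_clm_apply hd (differentiableAt_const w)]
    simp
  show fderiv ℝ (fun y => fderiv ℝ f y (Pi.single j 1)) x (Pi.single i 1)
      = fderiv ℝ (fun y => fderiv ℝ f y (Pi.single i 1)) x (Pi.single j 1)
  rw [key, key, hsymm.eq]

theorem sum_swap₁₂ (f : Fin n → Fin n → ℝ) :
    ∑ a : Fin n, ∑ b : Fin n, f a b = ∑ a : Fin n, ∑ b : Fin n, f b a := Finset.sum_comm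

theorem sum_swap₂₃ (f : Fin n → Fin n → Fin n → ℝ) :
    ∑ a : Fin n, ∑ b : Fin n, ∑ c : Fin n, f a b c
      = ∑ a : Fin n, ∑ b : Fin n, ∑ c : Fin n, f a c b :=
  Finset.sum_congr rfl fun _ _ => Finset.sum_comm

theorem sum_swap₃₄ (f : Fin n → Fin n → Fin n → Fin n → ℝ) :
    ∑ a : Fin n, ∑ b : Fin n, ∑ c : Fin n, ∑ d : Fin n, f a b c d
      = ∑ a : Fin n, ∑ b : Fin n, ∑ c : Fin n, ∑ d : Fin n, f a b d c :=
  Finset.sum_congr rfl fun _ _ => Finset.sum_congr rfl fun _ _ => Finset.sum_comm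

end Helpers

set_option maxHeartbeats 4000000 in
/-- the generalized deviation identity
`u^j (u^i ξ^k_{|i})_{|j} = R^k_{ijl} u^i u^j ξ^l + ξ^k_{|i} (u^i_{|j} u^j)
  + u^i u^j (Tξ)^k_{i|j} + (£_ξ F)^k − u^i ((£_ξ u)^k)_{|i} − u^k_{|i} (£_ξ u)^i`,
where `F^k := u^i u^k_{|i}`. -/
theorem generalized_deviation {n : ℕ} (hn : 0 < n)
    (Γ : Fin n → Fin n → Fin n → (Fin n → ℝ) → ℝ)
    (u ξ : Fin n → (Fin n → ℝ) → ℝ)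
    (hΓ : ∀ k i j, ContDiff ℝ (⊤ : ℕ∞) (Γ k i j))
    (hu : ∀ k, ContDiff ℝ (⊤ : ℕ∞) (u k))
    (hξ : ∀ k, ContDiff ℝ (⊤ : ℕ∞) (ξ k)) :
    ∀ (x : Fin n → ℝ) (k : Fin n),
      (∑ j, u j x * covV Γ (fun k y => ∑ i, u i y * covV Γ ξ k i y) k j x) =
        (∑ i, ∑ j, ∑ l, curv Γ k i j l x * u i x * u j x * ξ l x)
          + (∑ i, covV Γ ξ k i x * (∑ j, covV Γ u i j x * u j x))
          + (∑ i, ∑ j, u i x * u j x *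
              covT Γ (fun k i y => ∑ l, tor Γ k i l y * ξ l y) k i j x)
          + lieV ξ (fun k y => ∑ i, u i y * covV Γ u k i y) k x
          - (∑ i, u i x * covV Γ (lieV ξ u) k i x)
          - (∑ i, covV Γ u k i x * lieV ξ u i x) := by
  intro x k
  have hu3 : ∀ i, Differentiable ℝ (u i) := fun i => (hu i).differentiable (by simp)
  have hξ3 : ∀ i, Differentiable ℝ (ξ i) := fun i => (hξ i).differentiable (by simp)
  have hΓ3 : ∀ k i j, Differentiable ℝ (Γ k i j) := fun k i j => (hΓ k i j).differentiable (by simp)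
  have hu2 : ∀ k j, Differentiable ℝ (pd j (u k)) := fun k j => ((hu k).pd' j).differentiable (by simp)
  have hξ2 : ∀ k j, Differentiable ℝ (pd j (ξ k)) := fun k j => ((hξ k).pd' j).differentiable (by simp)
  have hΓ2 : ∀ k i j l, Differentiable ℝ (pd l (Γ k i j)) := fun k i j l => ((hΓ k i j).pd' l).differentiable (by simp)
  have hlie : lieV ξ u = fun k y => ∑ j, ξ j y * pd j (u k) y - ∑ j, u j y * pd j (ξ k) y := rfl
  simp only [covV, covT, curv, tor, hlie, lieV]
  simp (disch := intros; fun_prop) only [pd_sum, pd_mul, pd_add, pd_sub]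
  simp only [Finset.sum_add_distrib, Finset.sum_sub_distrib, Finset.mul_sum, Finset.sum_mul,
    mul_add, add_mul, mul_sub, sub_mul]
  have h0 : (∑ x_1 : Fin n, ∑ i : Fin n, (u x_1 x) * ((pd x_1 (u i) x) * (pd i (ξ k) x))) = (∑ b0 : Fin n, ∑ b1 : Fin n, (pd b0 (u b1) x) * (pd b1 (ξ k) x) * (u b0 x)) := by
    try (refine Finset.sum_congr rfl fun b0 _ => Finset.sum_congr rfl fun b1 _ => ?_; ring)
  have h1 : (∑ x_1 : Fin n, ∑ x_2 : Fin n, (pd x_1 (ξ k) x) * ((pd x_2 (u x_1) x) * (u x_2 x))) = (∑ b0 : Fin n, ∑ b1 : Fin n, (pd b0 (u b1) x) * (pd b1 (ξ k) x) * (u b0 x)) := by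
    rw [sum_swap₁₂]
    try (refine Finset.sum_congr rfl fun b0 _ => Finset.sum_congr rfl fun b1 _ => ?_; ring)
  have h2 : (∑ x_1 : Fin n, ∑ i : Fin n, (u i x) * (pd i (u x_1) x) * (pd x_1 (ξ k) x)) = (∑ b0 : Fin n, ∑ b1 : Fin n, (pd b0 (u b1) x) * (pd b1 (ξ k) x) * (u b0 x)) := by
    rw [sum_swap₁₂]
    try (refine Finset.sum_congr rfl fun b0 _ => Finset.sum_congr rfl fun b1 _ => ?_; ring)
  have h3 : (∑ x_1 : Fin n, ∑ x_2 : Fin n, ∑ i : Fin n, (u x_1 x) * ((pd x_1 (u x_2) x) * ((Γ k i x_2 x) * (ξ i x)))) = (∑ b0 : Fin n, ∑ b1 : Fin n, ∑ b2 : Fin n, (pd b0 (u b1) x) * (u b0 x) * (Γ k b2 b1 x) * (ξ b2 x)) := by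
    try (refine Finset.sum_congr rfl fun b0 _ => Finset.sum_congr rfl fun b1 _ => Finset.sum_congr rfl fun b2 _ => ?_; ring)
  have h4 : (∑ x_1 : Fin n, ∑ x_2 : Fin n, ∑ i : Fin n, (Γ k i x_1 x) * (ξ i x) * ((pd x_2 (u x_1) x) * (u x_2 x))) = (∑ b0 : Fin n, ∑ b1 : Fin n, ∑ b2 : Fin n, (pd b0 (u b1) x) * (u b0 x) * (Γ k b2 b1 x) * (ξ b2 x)) := by
    rw [sum_swap₁₂]
    try (refine Finset.sum_congr rfl fun b0 _ => Finset.sum_congr rfl fun b1 _ => Finset.sum_congr rfl fun b2 _ => ?_; ring)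
  have h5 : (∑ x_1 : Fin n, ∑ i : Fin n, (u x_1 x) * ((u i x) * (pd x_1 (pd i (ξ k)) x))) = (∑ b0 : Fin n, ∑ b1 : Fin n, (pd b0 (pd b1 (ξ k)) x) * (u b0 x) * (u b1 x)) := by
    try (refine Finset.sum_congr rfl fun b0 _ => Finset.sum_congr rfl fun b1 _ => ?_; ring)
  have h6 : (∑ x_1 : Fin n, ∑ x_2 : Fin n, ∑ i : Fin n, (u x_1 x) * ((u x_2 x) * ((pd x_1 (Γ k i x_2) x) * (ξ i x)))) = (∑ b0 : Fin n, ∑ b1 : Fin n, ∑ b2 : Fin n, (pd b0 (Γ k b1 b2) x) * (u b0 x) * (u b2 x) * (ξ b1 x)) := by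
    rw [sum_swap₂₃]
    try (refine Finset.sum_congr rfl fun b0 _ => Finset.sum_congr rfl fun b1 _ => Finset.sum_congr rfl fun b2 _ => ?_; ring)
  have h7 : (∑ x_1 : Fin n, ∑ x_2 : Fin n, ∑ i : Fin n, (u x_1 x) * (u x_2 x) * ((pd x_2 (Γ k i x_1) x) * (ξ i x))) = (∑ b0 : Fin n, ∑ b1 : Fin n, ∑ b2 : Fin n, (pd b0 (Γ k b1 b2) x) * (u b0 x) * (u b2 x) * (ξ b1 x)) := by
    rw [sum_swap₁₂]
    rw [sum_swap₂₃]
    try (refine Finset.sum_congr rfl fun b0 _ => Finset.sum_congr rfl fun b1 _ => Finset.sum_congr rfl fun b2 _ => ?_; ring)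
  have h8 : (∑ x_1 : Fin n, ∑ x_2 : Fin n, ∑ i : Fin n, (u x_1 x) * ((u x_2 x) * ((Γ k i x_2 x) * (pd x_1 (ξ i) x)))) = (∑ b0 : Fin n, ∑ b1 : Fin n, ∑ b2 : Fin n, (pd b0 (ξ b1) x) * (u b0 x) * (u b2 x) * (Γ k b1 b2 x)) := by
    rw [sum_swap₂₃]
    try (refine Finset.sum_congr rfl fun b0 _ => Finset.sum_congr rfl fun b1 _ => Finset.sum_congr rfl fun b2 _ => ?_; ring)
  have h9 : (∑ x_1 : Fin n, ∑ x_2 : Fin n, ∑ i : Fin n, (u x_1 x) * ((Γ k x_2 x_1 x) * ((u i x) * (pd i (ξ x_2) x)))) = (∑ b0 : Fin n, ∑ b1 : Fin n, ∑ b2 : Fin n, (pd b0 (ξ b1) x) * (u b0 x) * (u b2 x) * (Γ k b1 b2 x)) := by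
    rw [sum_swap₁₂]
    rw [sum_swap₂₃]
    rw [sum_swap₁₂]
    try (refine Finset.sum_congr rfl fun b0 _ => Finset.sum_congr rfl fun b1 _ => Finset.sum_congr rfl fun b2 _ => ?_; ring)
  have h10 : (∑ x_1 : Fin n, ∑ x_2 : Fin n, ∑ i : Fin n, (u x_1 x) * (u x_2 x) * ((Γ k i x_1 x) * (pd x_2 (ξ i) x))) = (∑ b0 : Fin n, ∑ b1 : Fin n, ∑ b2 : Fin n, (pd b0 (ξ b1) x) * (u b0 x) * (u b2 x) * (Γ k b1 b2 x)) := by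
    rw [sum_swap₁₂]
    rw [sum_swap₂₃]
    try (refine Finset.sum_congr rfl fun b0 _ => Finset.sum_congr rfl fun b1 _ => Finset.sum_congr rfl fun b2 _ => ?_; ring)
  have h11 : (∑ x_1 : Fin n, ∑ x_2 : Fin n, ∑ x_3 : Fin n, ∑ i : Fin n, (u x_1 x) * ((Γ k x_2 x_1 x) * ((u x_3 x) * ((Γ x_2 i x_3 x) * (ξ i x))))) = (∑ b0 : Fin n, ∑ b1 : Fin n, ∑ b2 : Fin n, ∑ b3 : Fin n, (u b0 x) * (u b1 x) * (Γ b2 b3 b0 x) * (Γ k b2 b1 x) * (ξ b3 x)) := by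
    rw [sum_swap₂₃]
    rw [sum_swap₁₂]
    try (refine Finset.sum_congr rfl fun b0 _ => Finset.sum_congr rfl fun b1 _ => Finset.sum_congr rfl fun b2 _ => Finset.sum_congr rfl fun b3 _ => ?_; ring)
  have h12 : (∑ x_1 : Fin n, ∑ x_2 : Fin n, ∑ x_3 : Fin n, ∑ i : Fin n, (u x_1 x) * (u x_2 x) * ((Γ k x_3 x_2 x) * ((Γ x_3 i x_1 x) * (ξ i x)))) = (∑ b0 : Fin n, ∑ b1 : Fin n, ∑ b2 : Fin n, ∑ b3 : Fin n, (u b0 x) * (u b1 x) * (Γ b2 b3 b0 x) * (Γ k b2 b1 x) * (ξ b3 x)) := by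
    try (refine Finset.sum_congr rfl fun b0 _ => Finset.sum_congr rfl fun b1 _ => Finset.sum_congr rfl fun b2 _ => Finset.sum_congr rfl fun b3 _ => ?_; ring)
  have h13 : (∑ x_1 : Fin n, ∑ x_2 : Fin n, ∑ x_3 : Fin n, (pd x_2 (Γ k x_1 x_3) x) * (u x_1 x) * (u x_2 x) * (ξ x_3 x)) = (∑ b0 : Fin n, ∑ b1 : Fin n, ∑ b2 : Fin n, (pd b0 (Γ k b1 b2) x) * (u b0 x) * (u b1 x) * (ξ b2 x)) := by
    rw [sum_swap₁₂]
    try (refine Finset.sum_congr rfl fun b0 _ => Finset.sum_congr rfl fun b1 _ => Finset.sum_congr rfl fun b2 _ => ?_; ring)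
  have h14 : (∑ x_1 : Fin n, ∑ x_2 : Fin n, ∑ i : Fin n, (u x_1 x) * (u x_2 x) * ((pd x_2 (Γ k x_1 i) x) * (ξ i x))) = (∑ b0 : Fin n, ∑ b1 : Fin n, ∑ b2 : Fin n, (pd b0 (Γ k b1 b2) x) * (u b0 x) * (u b1 x) * (ξ b2 x)) := by
    rw [sum_swap₁₂]
    try (refine Finset.sum_congr rfl fun b0 _ => Finset.sum_congr rfl fun b1 _ => Finset.sum_congr rfl fun b2 _ => ?_; ring)
  have h15 : (∑ x_1 : Fin n, ∑ x_2 : Fin n, ∑ x_3 : Fin n, (pd x_3 (Γ k x_1 x_2) x) * (u x_1 x) * (u x_2 x) * (ξ x_3 x)) = (∑ b0 : Fin n, ∑ b1 : Fin n, ∑ b2 : Fin n, (pd b0 (Γ k b1 b2) x) * (u b1 x) * (u b2 x) * (ξ b0 x)) := by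
    rw [sum_swap₂₃]
    rw [sum_swap₁₂]
    try (refine Finset.sum_congr rfl fun b0 _ => Finset.sum_congr rfl fun b1 _ => Finset.sum_congr rfl fun b2 _ => ?_; ring)
  have h16 : (∑ x_1 : Fin n, ∑ x_2 : Fin n, ∑ i : Fin n, (ξ x_1 x) * ((u x_2 x) * ((pd x_1 (Γ k i x_2) x) * (u i x)))) = (∑ b0 : Fin n, ∑ b1 : Fin n, ∑ b2 : Fin n, (pd b0 (Γ k b1 b2) x) * (u b1 x) * (u b2 x) * (ξ b0 x)) := by
    rw [sum_swap₂₃]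
    try (refine Finset.sum_congr rfl fun b0 _ => Finset.sum_congr rfl fun b1 _ => Finset.sum_congr rfl fun b2 _ => ?_; ring)
  have h17 : (∑ x_1 : Fin n, ∑ x_2 : Fin n, ∑ x_3 : Fin n, ∑ i : Fin n, (Γ i x_1 x_3 x) * (Γ k i x_2 x) * (u x_1 x) * (u x_2 x) * (ξ x_3 x)) = (∑ b0 : Fin n, ∑ b1 : Fin n, ∑ b2 : Fin n, ∑ b3 : Fin n, (u b0 x) * (u b1 x) * (Γ b2 b0 b3 x) * (Γ k b2 b1 x) * (ξ b3 x)) := by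
    rw [sum_swap₃₄]
    try (refine Finset.sum_congr rfl fun b0 _ => Finset.sum_congr rfl fun b1 _ => Finset.sum_congr rfl fun b2 _ => Finset.sum_congr rfl fun b3 _ => ?_; ring)
  have h18 : (∑ x_1 : Fin n, ∑ x_2 : Fin n, ∑ x_3 : Fin n, ∑ i : Fin n, (u x_1 x) * (u x_2 x) * ((Γ k x_3 x_2 x) * ((Γ x_3 x_1 i x) * (ξ i x)))) = (∑ b0 : Fin n, ∑ b1 : Fin n, ∑ b2 : Fin n, ∑ b3 : Fin n, (u b0 x) * (u b1 x) * (Γ b2 b0 b3 x) * (Γ k b2 b1 x) * (ξ b3 x)) := by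
    try (refine Finset.sum_congr rfl fun b0 _ => Finset.sum_congr rfl fun b1 _ => Finset.sum_congr rfl fun b2 _ => Finset.sum_congr rfl fun b3 _ => ?_; ring)
  have h19 : (∑ x_1 : Fin n, ∑ x_2 : Fin n, ∑ x_3 : Fin n, ∑ i : Fin n, (Γ i x_1 x_2 x) * (Γ k i x_3 x) * (u x_1 x) * (u x_2 x) * (ξ x_3 x)) = (∑ b0 : Fin n, ∑ b1 : Fin n, ∑ b2 : Fin n, ∑ b3 : Fin n, (u b0 x) * (u b1 x) * (Γ b2 b0 b1 x) * (Γ k b2 b3 x) * (ξ b3 x)) := by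
    rw [sum_swap₃₄]
    try (refine Finset.sum_congr rfl fun b0 _ => Finset.sum_congr rfl fun b1 _ => Finset.sum_congr rfl fun b2 _ => Finset.sum_congr rfl fun b3 _ => ?_; ring)
  have h20 : (∑ x_1 : Fin n, ∑ x_2 : Fin n, ∑ x_3 : Fin n, ∑ i : Fin n, (u x_1 x) * (u x_2 x) * ((Γ x_3 x_1 x_2 x) * ((Γ k x_3 i x) * (ξ i x)))) = (∑ b0 : Fin n, ∑ b1 : Fin n, ∑ b2 : Fin n, ∑ b3 : Fin n, (u b0 x) * (u b1 x) * (Γ b2 b0 b1 x) * (Γ k b2 b3 x) * (ξ b3 x)) := by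
    try (refine Finset.sum_congr rfl fun b0 _ => Finset.sum_congr rfl fun b1 _ => Finset.sum_congr rfl fun b2 _ => Finset.sum_congr rfl fun b3 _ => ?_; ring)
  have h21 : (∑ x_1 : Fin n, ∑ x_2 : Fin n, ∑ x_3 : Fin n, (pd x_1 (ξ k) x) * ((Γ x_1 x_3 x_2 x) * (u x_3 x) * (u x_2 x))) = (∑ b0 : Fin n, ∑ b1 : Fin n, ∑ b2 : Fin n, (pd b0 (ξ k) x) * (u b1 x) * (u b2 x) * (Γ b0 b1 b2 x)) := by
    rw [sum_swap₂₃]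
    try (refine Finset.sum_congr rfl fun b0 _ => Finset.sum_congr rfl fun b1 _ => Finset.sum_congr rfl fun b2 _ => ?_; ring)
  have h22 : (∑ x_1 : Fin n, ∑ x_2 : Fin n, ∑ i : Fin n, (u x_2 x) * ((Γ x_1 i x_2 x) * (u i x)) * (pd x_1 (ξ k) x)) = (∑ b0 : Fin n, ∑ b1 : Fin n, ∑ b2 : Fin n, (pd b0 (ξ k) x) * (u b1 x) * (u b2 x) * (Γ b0 b1 b2 x)) := by
    rw [sum_swap₂₃]
    try (refine Finset.sum_congr rfl fun b0 _ => Finset.sum_congr rfl fun b1 _ => Finset.sum_congr rfl fun b2 _ => ?_; ring)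
  have h23 : (∑ x_1 : Fin n, ∑ x_2 : Fin n, ∑ x_3 : Fin n, ∑ i : Fin n, (Γ k i x_1 x) * (ξ i x) * ((Γ x_1 x_3 x_2 x) * (u x_3 x) * (u x_2 x))) = (∑ b0 : Fin n, ∑ b1 : Fin n, ∑ b2 : Fin n, ∑ b3 : Fin n, (u b0 x) * (u b1 x) * (Γ b2 b0 b1 x) * (Γ k b3 b2 x) * (ξ b3 x)) := by
    rw [sum_swap₁₂]
    rw [sum_swap₂₃]
    rw [sum_swap₁₂]
    try (refine Finset.sum_congr rfl fun b0 _ => Finset.sum_congr rfl fun b1 _ => Finset.sum_congr rfl fun b2 _ => Finset.sum_congr rfl fun b3 _ => ?_; ring)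
  have h24 : (∑ x_1 : Fin n, ∑ x_2 : Fin n, ∑ x_3 : Fin n, ∑ i : Fin n, (u x_1 x) * (u x_2 x) * ((Γ x_3 x_1 x_2 x) * ((Γ k i x_3 x) * (ξ i x)))) = (∑ b0 : Fin n, ∑ b1 : Fin n, ∑ b2 : Fin n, ∑ b3 : Fin n, (u b0 x) * (u b1 x) * (Γ b2 b0 b1 x) * (Γ k b3 b2 x) * (ξ b3 x)) := by
    try (refine Finset.sum_congr rfl fun b0 _ => Finset.sum_congr rfl fun b1 _ => Finset.sum_congr rfl fun b2 _ => Finset.sum_congr rfl fun b3 _ => ?_; ring)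
  have h25 : (∑ x_1 : Fin n, ∑ x_2 : Fin n, ∑ i : Fin n, (u x_1 x) * (u x_2 x) * ((Γ k x_1 i x) * (pd x_2 (ξ i) x))) = (∑ b0 : Fin n, ∑ b1 : Fin n, ∑ b2 : Fin n, (pd b0 (ξ b1) x) * (u b0 x) * (u b2 x) * (Γ k b2 b1 x)) := by
    rw [sum_swap₁₂]
    rw [sum_swap₂₃]
    try (refine Finset.sum_congr rfl fun b0 _ => Finset.sum_congr rfl fun b1 _ => Finset.sum_congr rfl fun b2 _ => ?_; ring)
  have h26 : (∑ x_1 : Fin n, ∑ x_2 : Fin n, ∑ i : Fin n, (Γ k i x_1 x) * (u i x) * ((u x_2 x) * (pd x_2 (ξ x_1) x))) = (∑ b0 : Fin n, ∑ b1 : Fin n, ∑ b2 : Fin n, (pd b0 (ξ b1) x) * (u b0 x) * (u b2 x) * (Γ k b2 b1 x)) := by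
    rw [sum_swap₁₂]
    try (refine Finset.sum_congr rfl fun b0 _ => Finset.sum_congr rfl fun b1 _ => Finset.sum_congr rfl fun b2 _ => ?_; ring)
  have h27 : (∑ x_1 : Fin n, ∑ i : Fin n, (ξ x_1 x) * ((pd x_1 (u i) x) * (pd i (u k) x))) = (∑ b0 : Fin n, ∑ b1 : Fin n, (pd b0 (u b1) x) * (pd b1 (u k) x) * (ξ b0 x)) := by
    try (refine Finset.sum_congr rfl fun b0 _ => Finset.sum_congr rfl fun b1 _ => ?_; ring)
  have h28 : (∑ x_1 : Fin n, ∑ x_2 : Fin n, (pd x_1 (u k) x) * ((ξ x_2 x) * (pd x_2 (u x_1) x))) = (∑ b0 : Fin n, ∑ b1 : Fin n, (pd b0 (u b1) x) * (pd b1 (u k) x) * (ξ b0 x)) := by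
    rw [sum_swap₁₂]
    try (refine Finset.sum_congr rfl fun b0 _ => Finset.sum_congr rfl fun b1 _ => ?_; ring)
  have h29 : (∑ x_1 : Fin n, ∑ x_2 : Fin n, ∑ i : Fin n, (ξ x_1 x) * ((pd x_1 (u x_2) x) * ((Γ k i x_2 x) * (u i x)))) = (∑ b0 : Fin n, ∑ b1 : Fin n, ∑ b2 : Fin n, (pd b0 (u b1) x) * (u b2 x) * (Γ k b2 b1 x) * (ξ b0 x)) := by
    try (refine Finset.sum_congr rfl fun b0 _ => Finset.sum_congr rfl fun b1 _ => Finset.sum_congr rfl fun b2 _ => ?_; ring)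
  have h30 : (∑ x_1 : Fin n, ∑ x_2 : Fin n, ∑ i : Fin n, (Γ k i x_1 x) * (u i x) * ((ξ x_2 x) * (pd x_2 (u x_1) x))) = (∑ b0 : Fin n, ∑ b1 : Fin n, ∑ b2 : Fin n, (pd b0 (u b1) x) * (u b2 x) * (Γ k b2 b1 x) * (ξ b0 x)) := by
    rw [sum_swap₁₂]
    try (refine Finset.sum_congr rfl fun b0 _ => Finset.sum_congr rfl fun b1 _ => Finset.sum_congr rfl fun b2 _ => ?_; ring)
  have h31 : (∑ x_1 : Fin n, ∑ i : Fin n, (ξ x_1 x) * ((u i x) * (pd x_1 (pd i (u k)) x))) = (∑ b0 : Fin n, ∑ b1 : Fin n, (pd b0 (pd b1 (u k)) x) * (u b0 x) * (ξ b1 x)) := by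
    rw [sum_swap₁₂]
    try (refine Finset.sum_congr rfl fun b0 _ => Finset.sum_congr rfl fun b1 _ => ?_; rw [pd_comm (hu k) b1 b0 x]; ring)
  have h32 : (∑ x_1 : Fin n, ∑ i : Fin n, (u x_1 x) * ((ξ i x) * (pd x_1 (pd i (u k)) x))) = (∑ b0 : Fin n, ∑ b1 : Fin n, (pd b0 (pd b1 (u k)) x) * (u b0 x) * (ξ b1 x)) := by
    try (refine Finset.sum_congr rfl fun b0 _ => Finset.sum_congr rfl fun b1 _ => ?_; ring)
  have h33 : (∑ x_1 : Fin n, ∑ x_2 : Fin n, ∑ i : Fin n, (ξ x_1 x) * ((u x_2 x) * ((Γ k i x_2 x) * (pd x_1 (u i) x)))) = (∑ b0 : Fin n, ∑ b1 : Fin n, ∑ b2 : Fin n, (pd b0 (u b1) x) * (u b2 x) * (Γ k b1 b2 x) * (ξ b0 x)) := by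
    rw [sum_swap₂₃]
    try (refine Finset.sum_congr rfl fun b0 _ => Finset.sum_congr rfl fun b1 _ => Finset.sum_congr rfl fun b2 _ => ?_; ring)
  have h34 : (∑ x_1 : Fin n, ∑ x_2 : Fin n, ∑ i : Fin n, (u x_1 x) * ((Γ k x_2 x_1 x) * ((ξ i x) * (pd i (u x_2) x)))) = (∑ b0 : Fin n, ∑ b1 : Fin n, ∑ b2 : Fin n, (pd b0 (u b1) x) * (u b2 x) * (Γ k b1 b2 x) * (ξ b0 x)) := by
    rw [sum_swap₁₂]
    rw [sum_swap₂₃]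
    rw [sum_swap₁₂]
    try (refine Finset.sum_congr rfl fun b0 _ => Finset.sum_congr rfl fun b1 _ => Finset.sum_congr rfl fun b2 _ => ?_; ring)
  have h35 : (∑ x_1 : Fin n, ∑ i : Fin n, (u x_1 x) * ((pd x_1 (ξ i) x) * (pd i (u k) x))) = (∑ b0 : Fin n, ∑ b1 : Fin n, (pd b0 (u k) x) * (pd b1 (ξ b0) x) * (u b1 x)) := by
    rw [sum_swap₁₂]
    try (refine Finset.sum_congr rfl fun b0 _ => Finset.sum_congr rfl fun b1 _ => ?_; ring)
  have h36 : (∑ x_1 : Fin n, ∑ x_2 : Fin n, (pd x_1 (u k) x) * ((u x_2 x) * (pd x_2 (ξ x_1) x))) = (∑ b0 : Fin n, ∑ b1 : Fin n, (pd b0 (u k) x) * (pd b1 (ξ b0) x) * (u b1 x)) := by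
    try (refine Finset.sum_congr rfl fun b0 _ => Finset.sum_congr rfl fun b1 _ => ?_; ring)
  rw [h0, h1, h2, h3, h4, h5, h6, h7, h8, h9, h10, h11, h12, h13, h14, h15, h16, h17, h18, h19, h20, h21, h22, h23, h24, h25, h26, h27, h28, h29, h30, h31, h32, h33, h34, h35, h36]
  ring
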